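/- Let C be an (n,k,ℓ) MDS array code over F_q in systematic form with block matrix A (r = n−k, 2 ≤ h ≤ r, β = hℓ/r an integer), and let F_1 and F_2 be two DISJOINT h-subsets of the systematic nodes, each admitting an (h, n−h) optimal repair scheme (with repair matrices S_{j→F_1} and S_{j→F_2} respectively). Then rank( S_{P→F_2}·A(:,F_1) ) = h²ℓ/r, and the row space of S_{P→F_2}·A(:,F_1) equals the row space of the block-diagonal matrix S_{F_1→F_2} = diag(S_{u→F_2})_{u∈F_1}, where S_{P→F_2} = diag(S_{p_1→F_2},…,S_{p_r→F_2}). -/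

import Mathlib

/-!
Write `M_F = S_{P→F₂} A(:,F)` for the map sending data supported on `F` to its parity
transmissions towards the repair of `F₂`. When no systematic helper of `F₂` sends anything, the
repair recovers the `F₂`-data from the parity transmissions alone, so `M_{F₂}` is injective, hence
invertible because `hℓ = rβ`. If `z` lives on `F₁` and `S_{F₁→F₂} z = 0`, write
`M_{F₁} z = M_{F₂} y`; then `z` and `y` send the same data to the repair of `F₂`, so `y` agrees
with `z` on `F₂`, i.e. `y = 0`. Thus `ker S_{F₁→F₂} ≤ ker M_{F₁}`, which gives the inclusion of
row spaces and `rank M_{F₁} ≤ hβ`. Conversely, `h` block rows `I` of `M_{F₁}` factor as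
`diag(S_{p→F₂})_{p ∈ I} · A(I,F₁)` with `A(I,F₁)` invertible (MDS) and every `S_{p→F₂}` onto
(invertibility of `M_{F₂}`), so `rank M_{F₁} ≥ hβ`.
-/

open Matrix

noncomputable section

variable {𝔽 : Type*} [Field 𝔽]

/-- Every square block submatrix of the `r × k` block matrix `A` (with `ℓ × ℓ` blocks) is
invertible; this is the MDS property of the systematic-form array code determined by `A`. -/
def BlockInvertible {r k ℓ : ℕ} (A : Fin r → Fin k → Matrix (Fin ℓ) (Fin ℓ) 𝔽) : Prop :=
  ∀ (I : Finset (Fin r)) (J : Finset (Fin k)), I.card = J.card →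
    Function.Bijective
      ((Matrix.of fun p : ↥I × Fin ℓ => fun q : ↥J × Fin ℓ =>
        A p.1.1 q.1.1 p.2 q.2).mulVecLin)

/-- The value of the codeword parameterized by the systematic data `x` at a node:
nodes are indexed by `Fin k ⊕ Fin r` (systematic nodes `u_j = Sum.inl j`,
parity nodes `p_i = Sum.inr i`), and `C_{p_i} = ∑ j, A_{p_i,u_j} x_j`. -/
def nodeVal {r k ℓ : ℕ} (A : Fin r → Fin k → Matrix (Fin ℓ) (Fin ℓ) 𝔽)
    (x : Fin k → Fin ℓ → 𝔽) : Fin k ⊕ Fin r → Fin ℓ → 𝔽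
  | Sum.inl j => x j
  | Sum.inr i => ∑ j, (A i j).mulVec (x j)

/-- The helper nodes for a failed set `F` of systematic nodes: all `n - h` other nodes. -/
def helperSet {r k : ℕ} (F : Finset (Fin k)) : Finset (Fin k ⊕ Fin r) :=
  (F.map ⟨Sum.inl, Sum.inl_injective⟩)ᶜ

/-- An `(h, n-h)` optimal repair scheme for the failed set `F` of systematic nodes of the
systematic-form code determined by `A`: each helper node `j` sends `S j *ᵥ C_j`, and a
linear map `g` (the matrix `M_F`) reconstructs the stacked failed symbols. -/
def SysRepairScheme {r k ℓ β : ℕ} (A : Fin r → Fin k → Matrix (Fin ℓ) (Fin ℓ) 𝔽)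
    (F : Finset (Fin k)) (S : Fin k ⊕ Fin r → Matrix (Fin β) (Fin ℓ) 𝔽) : Prop :=
  ∃ g : (↥(helperSet (r := r) F) → Fin β → 𝔽) →ₗ[𝔽] (↥F → Fin ℓ → 𝔽),
    ∀ x : Fin k → Fin ℓ → 𝔽, ∀ i : ↥F,
      x i.1 = g (fun j => (S j.1).mulVec (nodeVal A x j.1)) i

/-- The row space of a matrix. -/
def rowSpace {m n : Type*} (S : Matrix m n 𝔽) : Submodule 𝔽 (n → 𝔽) :=
  Submodule.span 𝔽 (Set.range fun i : m => fun j : n => S i j)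

theorem LinearMap.exists_comp_eq_of_ker_le {K V W U : Type*} [DivisionRing K] [AddCommGroup V]
    [Module K V] [AddCommGroup W] [Module K W] [AddCommGroup U] [Module K U]
    (f : V →ₗ[K] W) (g : V →ₗ[K] U) (h : ker f ≤ ker g) : ∃ N : W →ₗ[K] U, N ∘ₗ f = g := by
  obtain ⟨L, hL⟩ := ((ker f).liftQ f le_rfl).exists_leftInverse_of_injective
    ((ker f).ker_liftQ_eq_bot f le_rfl le_rfl)
  refine ⟨(ker f).liftQ g h ∘ₗ L, LinearMap.ext fun v => ?_⟩
  have hv : L (f v) = (ker f).mkQ v := by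
    simpa using LinearMap.congr_fun hL ((ker f).mkQ v)
  simp [hv]

theorem rowSpace_eq_range_mulVecLin_transpose {m n : Type*} [Fintype m] (S : Matrix m n 𝔽) :
    rowSpace S = LinearMap.range Sᵀ.mulVecLin := by
  rw [Matrix.range_mulVecLin]; rfl

theorem rowSpace_mul_le {l m n : Type*} [Fintype l] [Fintype m] (C : Matrix l m 𝔽)
    (S : Matrix m n 𝔽) : rowSpace (C * S) ≤ rowSpace S := by
  rw [rowSpace_eq_range_mulVecLin_transpose, rowSpace_eq_range_mulVecLin_transpose,
    transpose_mul, mulVecLin_mul]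
  exact LinearMap.range_comp_le_range _ _

theorem rowSpace_le_of_ker_le {l m n : Type*} [Fintype l] [Fintype m] [Fintype n]
    {M : Matrix l n 𝔽} {S : Matrix m n 𝔽}
    (h : LinearMap.ker S.mulVecLin ≤ LinearMap.ker M.mulVecLin) : rowSpace M ≤ rowSpace S := by
  classical
  obtain ⟨N, hN⟩ := S.mulVecLin.exists_comp_eq_of_ker_le M.mulVecLin h
  have hM : M = LinearMap.toMatrix' N * S := by
    rw [← LinearMap.toMatrix'_toLin' S, ← LinearMap.toMatrix'_comp, toLin'_apply', hN,
      ← toLin'_apply', LinearMap.toMatrix'_toLin']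
  exact hM ▸ rowSpace_mul_le _ _

theorem finrank_rowSpace {m n : Type*} [Fintype m] [Fintype n] (S : Matrix m n 𝔽) :
    Module.finrank 𝔽 (rowSpace S) = S.rank :=
  S.rank_eq_finrank_span_row.symm

theorem rank_le_rank_of_rowSpace_le {l m n : Type*} [Fintype l] [Fintype m] [Fintype n]
    {M : Matrix l n 𝔽} {S : Matrix m n 𝔽} (h : rowSpace M ≤ rowSpace S) : M.rank ≤ S.rank := by
  rw [← finrank_rowSpace, ← finrank_rowSpace]
  exact Submodule.finrank_mono h

theorem rank_eq_card_of_surjective {m n : Type*} [Fintype m] [Fintype n] {M : Matrix m n 𝔽}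
    (hM : Function.Surjective M.mulVecLin) : M.rank = Fintype.card m := by
  rw [Matrix.rank, LinearMap.range_eq_top.mpr hM, finrank_top, Module.finrank_fintype_fun_eq_card]

theorem Matrix.comp_mulVec {I J K L R : Type*} [Fintype J] [Fintype L]
    [NonUnitalNonAssocSemiring R]
    (B : Matrix I J (Matrix K L R)) (x : J × L → R) :
    comp I J K L R B *ᵥ x = fun p => (∑ j, B p.1 j *ᵥ fun l => x (j, l)) p.2 := by
  ext p
  simp [mulVec, dotProduct, Fintype.sum_prod_type, Finset.sum_apply]

section Repair

variable {r k ℓ : ℕ}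

def extendByZero {F : Finset (Fin k)} (z : ↥F × Fin ℓ → 𝔽) : Fin k → Fin ℓ → 𝔽 :=
  fun j l => if h : j ∈ F then z (⟨j, h⟩, l) else 0

@[simp] theorem extendByZero_coe {F : Finset (Fin k)} (z : ↥F × Fin ℓ → 𝔽) (v : F) :
    extendByZero z v = fun l => z (v, l) :=
  funext fun _ => dif_pos v.2

theorem extendByZero_of_notMem {F : Finset (Fin k)} (z : ↥F × Fin ℓ → 𝔽) {j : Fin k}
    (hj : j ∉ F) : extendByZero z j = 0 :=
  funext fun _ => dif_neg hj

theorem nodeVal_inr_extendByZero (A : Fin r → Fin k → Matrix (Fin ℓ) (Fin ℓ) 𝔽)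
    {F : Finset (Fin k)} (z : ↥F × Fin ℓ → 𝔽) (i : Fin r) :
    nodeVal A (extendByZero z) (Sum.inr i) = ∑ v : F, A i v *ᵥ fun l => z (v, l) := by
  rw [nodeVal, ← Finset.sum_subset (Finset.subset_univ F)
    (fun j _ hj => by rw [extendByZero_of_notMem z hj, mulVec_zero]), ← Finset.sum_coe_sort F]
  simp

variable {β : ℕ} (A : Fin r → Fin k → Matrix (Fin ℓ) (Fin ℓ) 𝔽)
  (S : Fin k ⊕ Fin r → Matrix (Fin β) (Fin ℓ) 𝔽)

/-- `S_{P→F'} A(:,F)`, where `S` are the repair matrices of a failed set `F'`. -/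
def parityRepairMatrix (F : Finset (Fin k)) : Matrix (Fin r × Fin β) (↥F × Fin ℓ) 𝔽 :=
  Matrix.of fun p q => (S (Sum.inr p.1) * A p.1 q.1.1) p.2 q.2

/-- `S_{F→F'} = diag(S_{u→F'})_{u ∈ F}`, where `S` are the repair matrices of a failed set `F'`. -/
def systematicRepairMatrix (F : Finset (Fin k)) : Matrix (↥F × Fin β) (↥F × Fin ℓ) 𝔽 :=
  Matrix.of fun p q => if p.1 = q.1 then S (Sum.inl p.1.1) p.2 q.2 else 0

theorem parityRepairMatrix_mulVec (F : Finset (Fin k)) (z : ↥F × Fin ℓ → 𝔽) :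
    parityRepairMatrix A S F *ᵥ z =
      fun p => (S (Sum.inr p.1) *ᵥ ∑ v : F, A p.1 v *ᵥ fun l => z (v, l)) p.2 := by
  rw [show parityRepairMatrix A S F = comp _ _ _ _ _ (of fun i (v : F) => S (Sum.inr i) * A i v)
    from rfl, comp_mulVec]
  simp [mulVec_sum, mulVec_mulVec]

theorem systematicRepairMatrix_mulVec (F : Finset (Fin k)) (z : ↥F × Fin ℓ → 𝔽) :
    systematicRepairMatrix S F *ᵥ z = fun p => (S (Sum.inl p.1) *ᵥ fun l => z (p.1, l)) p.2 := by
  ext p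
  simp [systematicRepairMatrix, mulVec, dotProduct, Fintype.sum_prod_type]

variable {A S}

theorem SysRepairScheme.eqOn_of_parity_eq {F : Finset (Fin k)} (hS : SysRepairScheme A F S)
    {x x' : Fin k → Fin ℓ → 𝔽} (hx : ∀ u ∉ F, S (Sum.inl u) *ᵥ x u = 0)
    (hx' : ∀ u ∉ F, S (Sum.inl u) *ᵥ x' u = 0)
    (hpar : ∀ i, S (Sum.inr i) *ᵥ nodeVal A x (Sum.inr i) =
      S (Sum.inr i) *ᵥ nodeVal A x' (Sum.inr i))
    {u : Fin k} (hu : u ∈ F) : x u = x' u := by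
  obtain ⟨g, hg⟩ := hS
  have hsent : (fun j : ↥(helperSet (r := r) F) => S j *ᵥ nodeVal A x j) =
      fun j : ↥(helperSet (r := r) F) => S j *ᵥ nodeVal A x' j := by
    funext ⟨j, hj⟩
    rcases j with j | i
    · have hj : j ∉ F := by simpa [helperSet] using hj
      exact (hx j hj).trans (hx' j hj).symm
    · exact hpar i
  rw [hg x ⟨u, hu⟩, hg x' ⟨u, hu⟩, hsent]

theorem parity_eq_of_parityRepairMatrix_mulVec_eq {F F' : Finset (Fin k)} {z : ↥F × Fin ℓ → 𝔽}
    {z' : ↥F' × Fin ℓ → 𝔽} (h : parityRepairMatrix A S F *ᵥ z = parityRepairMatrix A S F' *ᵥ z')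
    (i : Fin r) : S (Sum.inr i) *ᵥ nodeVal A (extendByZero z) (Sum.inr i) =
      S (Sum.inr i) *ᵥ nodeVal A (extendByZero z') (Sum.inr i) := by
  funext b
  simpa [parityRepairMatrix_mulVec, nodeVal_inr_extendByZero] using congrFun h (i, b)

theorem mulVec_extendByZero_of_notMem {F : Finset (Fin k)} (z : ↥F × Fin ℓ → 𝔽) {u : Fin k}
    (hu : u ∉ F) : S (Sum.inl u) *ᵥ extendByZero z u = 0 := by
  rw [extendByZero_of_notMem z hu, mulVec_zero]

theorem SysRepairScheme.injective_parityRepairMatrix {F : Finset (Fin k)}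
    (hS : SysRepairScheme A F S) : Function.Injective (parityRepairMatrix A S F).mulVecLin := by
  intro z z' h
  have hpar := parity_eq_of_parityRepairMatrix_mulVec_eq h
  funext ⟨v, l⟩
  have hv := hS.eqOn_of_parity_eq (fun u hu => mulVec_extendByZero_of_notMem z hu)
    (fun u hu => mulVec_extendByZero_of_notMem z' hu) hpar v.2
  simpa using congrFun hv l

theorem SysRepairScheme.surjective_parityRepairMatrix {F : Finset (Fin k)}
    (hS : SysRepairScheme A F S) (hdim : F.card * ℓ = r * β) :
    Function.Surjective (parityRepairMatrix A S F).mulVecLin :=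
  (LinearMap.injective_iff_surjective_of_finrank_eq_finrank
    (by simp [Module.finrank_fintype_fun_eq_card, hdim])).mp hS.injective_parityRepairMatrix

theorem surjective_of_surjective_parityRepairMatrix {F : Finset (Fin k)}
    (h : Function.Surjective (parityRepairMatrix A S F).mulVecLin) (i : Fin r) :
    Function.Surjective (S (Sum.inr i)).mulVecLin := by
  intro t
  obtain ⟨z, hz⟩ := h fun p => t p.2
  refine ⟨∑ v : F, A i v *ᵥ fun l => z (v, l), funext fun b => ?_⟩
  have hzb := congrFun hz (i, b)
  rwa [mulVecLin_apply, parityRepairMatrix_mulVec] at hzb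

theorem SysRepairScheme.ker_systematicRepairMatrix_le {F₁ F₂ : Finset (Fin k)}
    (hS : SysRepairScheme A F₂ S) (hdim : F₂.card * ℓ = r * β) (hdisj : Disjoint F₁ F₂) :
    LinearMap.ker (systematicRepairMatrix S F₁).mulVecLin ≤
      LinearMap.ker (parityRepairMatrix A S F₁).mulVecLin := by
  intro z hz
  rw [LinearMap.mem_ker, mulVecLin_apply] at hz ⊢
  obtain ⟨y, hy⟩ := hS.surjective_parityRepairMatrix hdim (parityRepairMatrix A S F₁ *ᵥ z)
  rw [mulVecLin_apply] at hy
  suffices y = 0 by rw [← hy, this, mulVec_zero]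
  have hz_silent : ∀ u ∉ F₂, S (Sum.inl u) *ᵥ extendByZero z u = 0 := by
    intro u _
    by_cases hu : u ∈ F₁
    · rw [show extendByZero z u = _ from extendByZero_coe z ⟨u, hu⟩]
      funext b
      simpa [systematicRepairMatrix_mulVec] using congrFun hz (⟨u, hu⟩, b)
    · exact mulVec_extendByZero_of_notMem z hu
  funext ⟨v, l⟩
  have hv := hS.eqOn_of_parity_eq (fun u hu => mulVec_extendByZero_of_notMem y hu) hz_silent
    (parity_eq_of_parityRepairMatrix_mulVec_eq hy) v.2
  simpa [extendByZero_of_notMem z (Finset.disjoint_right.mp hdisj v.2)] using congrFun hv l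

theorem le_rank_parityRepairMatrix (hA : BlockInvertible A)
    (hS : ∀ i, Function.Surjective (S (Sum.inr i)).mulVecLin) {F : Finset (Fin k)}
    (hF : F.card ≤ r) : F.card * β ≤ (parityRepairMatrix A S F).rank := by
  obtain ⟨I, -, hI⟩ := Finset.exists_subset_card_eq (s := (Finset.univ : Finset (Fin r)))
    (by simpa using hF)
  have hB : Function.Surjective (comp _ _ _ _ _ (of fun (i : I) (v : F) => A i v)).mulVecLin :=
    (hA I F hI).2
  let rows : ↥I × Fin β → Fin r × Fin β := fun p => (p.1.1, p.2)
  have hsurj : Function.Surjective ((parityRepairMatrix A S F).submatrix rows id).mulVecLin := by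
    intro w
    choose y hy using fun i : I => hS i fun b => w (i, b)
    obtain ⟨z, hz⟩ := hB fun q => y q.1 q.2
    refine ⟨z, funext fun p => ?_⟩
    have hBz : ∑ v : F, A p.1 v *ᵥ (fun l => z (v, l)) = y p.1 := funext fun l => by
      have hzl := congrFun hz (p.1, l)
      rwa [mulVecLin_apply, comp_mulVec] at hzl
    change (parityRepairMatrix A S F *ᵥ z) (p.1.1, p.2) = w p
    rw [parityRepairMatrix_mulVec]
    exact (congrArg (fun v => (S (Sum.inr p.1.1) *ᵥ v) p.2) hBz).trans (congrFun (hy p.1) p.2)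
  calc F.card * β = Fintype.card (↥I × Fin β) := by simp [hI]
    _ = ((parityRepairMatrix A S F).submatrix rows id).rank :=
      (rank_eq_card_of_surjective hsurj).symm
    _ ≤ _ := rank_submatrix_le _ _ _

end Repair

theorem stmt8_general {r k ℓ h β : ℕ} (hhr : h ≤ r) (hβ : h * ℓ = r * β)
    (A : Fin r → Fin k → Matrix (Fin ℓ) (Fin ℓ) 𝔽) (hA : BlockInvertible A)
    (F₁ F₂ : Finset (Fin k)) (hF₁ : F₁.card = h) (hF₂ : F₂.card = h)
    (hdisj : Disjoint F₁ F₂)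
    (S₂ : Fin k ⊕ Fin r → Matrix (Fin β) (Fin ℓ) 𝔽)
    (hS₂ : SysRepairScheme A F₂ S₂) :
    (Matrix.of fun p : Fin r × Fin β => fun q : ↥F₁ × Fin ℓ =>
        (S₂ (Sum.inr p.1) * A p.1 q.1.1) p.2 q.2).rank = h * β ∧
    rowSpace (Matrix.of fun p : Fin r × Fin β => fun q : ↥F₁ × Fin ℓ =>
        (S₂ (Sum.inr p.1) * A p.1 q.1.1) p.2 q.2) =
      rowSpace (Matrix.of fun p : ↥F₁ × Fin β => fun q : ↥F₁ × Fin ℓ =>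
        if p.1 = q.1 then S₂ (Sum.inl p.1.1) p.2 q.2 else 0) := by
  change (parityRepairMatrix A S₂ F₁).rank = h * β ∧
    rowSpace (parityRepairMatrix A S₂ F₁) = rowSpace (systematicRepairMatrix S₂ F₁)
  have hdim : F₂.card * ℓ = r * β := hF₂ ▸ hβ
  have hparity := hS₂.surjective_parityRepairMatrix hdim
  have hrow : rowSpace (parityRepairMatrix A S₂ F₁) ≤ rowSpace (systematicRepairMatrix S₂ F₁) :=
    rowSpace_le_of_ker_le (hS₂.ker_systematicRepairMatrix_le hdim hdisj)
  have hupper : (systematicRepairMatrix S₂ F₁).rank ≤ h * β := by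
    simpa [hF₁] using (systematicRepairMatrix S₂ F₁).rank_le_card_height
  have hlower : h * β ≤ (parityRepairMatrix A S₂ F₁).rank :=
    hF₁ ▸ le_rank_parityRepairMatrix hA (surjective_of_surjective_parityRepairMatrix hparity)
      (hF₁ ▸ hhr)
  have hrank : (parityRepairMatrix A S₂ F₁).rank = h * β :=
    le_antisymm ((rank_le_rank_of_rowSpace_le hrow).trans hupper) hlower
  refine ⟨hrank, Submodule.eq_of_le_of_finrank_le hrow ?_⟩
  rw [finrank_rowSpace, finrank_rowSpace]
  omega

/-- Lemma 2 of the paper, equality part for disjoint failed sets: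
if `F₁ ∩ F₂ = ∅` then `rank(S_{P→F₂} ⬝ A(:,F₁)) = h²ℓ/r = h·β` and
`⟨S_{P→F₂} ⬝ A(:,F₁)⟩ = ⟨S_{F₁→F₂}⟩`, the latter being the block-diagonal matrix
`diag(S_{u→F₂})_{u ∈ F₁}`. -/
theorem stmt8 {r k ℓ h β : ℕ} (hh2 : 2 ≤ h) (hhr : h ≤ r) (hβ : h * ℓ = r * β)
    (A : Fin r → Fin k → Matrix (Fin ℓ) (Fin ℓ) 𝔽) (hA : BlockInvertible A)
    (F₁ F₂ : Finset (Fin k)) (hF₁ : F₁.card = h) (hF₂ : F₂.card = h)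
    (hdisj : Disjoint F₁ F₂)
    (S₁ S₂ : Fin k ⊕ Fin r → Matrix (Fin β) (Fin ℓ) 𝔽)
    (hS₁ : SysRepairScheme A F₁ S₁) (hS₂ : SysRepairScheme A F₂ S₂) :
    (Matrix.of fun p : Fin r × Fin β => fun q : ↥F₁ × Fin ℓ =>
        (S₂ (Sum.inr p.1) * A p.1 q.1.1) p.2 q.2).rank = h * β ∧
    rowSpace (Matrix.of fun p : Fin r × Fin β => fun q : ↥F₁ × Fin ℓ =>
        (S₂ (Sum.inr p.1) * A p.1 q.1.1) p.2 q.2) =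
      rowSpace (Matrix.of fun p : ↥F₁ × Fin β => fun q : ↥F₁ × Fin ℓ =>
        if p.1 = q.1 then S₂ (Sum.inl p.1.1) p.2 q.2 else 0) :=
  stmt8_general hhr hβ A hA F₁ F₂ hF₁ hF₂ hdisj S₂ hS₂
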